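/- arXiv:2412.12787 — 3 statements merged into one kernel-verified Lean document; each statement's English description precedes it below -/
import Mathlib

section
/- Let b ≥ 2 and r ≥ 1 be integers, and let T = AF(b,r) be the almost fork graph with leaves as boundary. Then the Steklov eigenvalues of T are σ_1 = 0, σ_2 = b/(b(r+1)−1), and σ_k = 1/r for all 3 ≤ k ≤ b. -/
open scoped BigOperators
open Classical

/-- The Dirichlet energy of a function on a finite graph: `∑_{edges xy} (f x - f y)^2`. -/
noncomputable def dirichletEnergy {V : Type*} [Fintype V] (G : SimpleGraph V) (f : V → ℝ) : ℝ :=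
  (∑ x : V, ∑ y : V, if G.Adj x y then (f x - f y) ^ 2 else 0) / 2

/-- The `k`-th Steklov (Dirichlet-to-Neumann) eigenvalue (1-indexed, in increasing order
with multiplicity) of a finite graph `G` with boundary `B`, via the variational
(Courant–Fischer) characterization. -/
noncomputable def steklovEig {V : Type*} [Fintype V] (G : SimpleGraph V) (B : Finset V)
    (k : ℕ) : ℝ :=
  sInf { t : ℝ | ∃ F : Submodule ℝ (V → ℝ),
    Module.finrank ℝ (F.map (LinearMap.funLeft ℝ ℝ (fun x : {v // v ∈ B} => (x : V)))) = k ∧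
    ∀ f ∈ F, dirichletEnergy G f ≤ t * ∑ x ∈ B, (f x) ^ 2 }

/-- The set of leaves (vertices of degree 1) of a finite graph, as a `Finset`. -/
noncomputable def leavesFinset {V : Type*} [Fintype V] (G : SimpleGraph V) : Finset V :=
  Finset.univ.filter fun v => G.degree v = 1

/-- `σ_{k,max}(b,n)`: the maximum of the `k`-th Steklov eigenvalue over all trees with
`b` leaves (as boundary) and `n` vertices. -/
noncomputable def sigmaMax (k b n : ℕ) : ℝ :=
  sSup { s : ℝ | ∃ G : SimpleGraph (Fin n), G.IsTree ∧ (leavesFinset G).card = b ∧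
    s = steklovEig G (leavesFinset G) k }

/-- `σ̃_{2,max}(D,n)`: the maximum of the first nontrivial Steklov eigenvalue over all
trees with diameter `D` and `n` vertices. -/
noncomputable def sigmaTildeMax (D n : ℕ) : ℝ :=
  sSup { s : ℝ | ∃ G : SimpleGraph (Fin n), G.IsTree ∧ G.diam = D ∧
    s = steklovEig G (leavesFinset G) 2 }

/-- The almost fork graph `AF(b,r)`: `b` paths glued at a common endpoint (`Sum.inr false`),
one of length `r+1` (path `0`, with extra tip `Sum.inr true`) and `b-1` of length `r`.
Vertex `Sum.inl (ℓ, i)` is the vertex of the `ℓ`-th path at distance `i+1` from the center. -/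
def almostFork (b r : ℕ) : SimpleGraph ((Fin b × Fin r) ⊕ Bool) :=
  SimpleGraph.fromRel fun x y =>
    match x, y with
    | Sum.inr false, Sum.inl (_, i) => (i : ℕ) = 0
    | Sum.inl (ℓ, i), Sum.inl (m, j) => ℓ = m ∧ (j : ℕ) = (i : ℕ) + 1
    | Sum.inl (ℓ, i), Sum.inr true => (ℓ : ℕ) = 0 ∧ (i : ℕ) = r - 1
    | _, _ => False

/-!
Each leg of `AF(b,r)` is a path from the centre `c` to a leaf, so Cauchy–Schwarz along it gives
`E(f) ≥ ∑ₗ (f(endₗ) - f(c))² / lenₗ`, with equality for functions affine on every leg: the Steklov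
problem reduces to a star with conductances `1/(r+1)` (the long leg) and `1/r`.

Lower bounds: a `k`-dimensional space of boundary data contains a nonzero vector with zero sum
(`k = 2`), and also with zero value at the tip (`k ≥ 3`); on such vectors the star energy is at
least `b/(b(r+1)-1)`, resp. `1/r`, times the boundary norm (Cauchy–Schwarz and completing the
square in `f(c)`). Upper bounds: the constants; the constants together with the leg-affine function
with slopes `-(b-1)` on the long leg and `1` elsewhere; and the leg-affine functions vanishing at
the centre, whose Rayleigh quotient is at most `1/r` since every leg has length at least `r`.
-/

open Sum Finset Module

lemma Submodule.exists_mem_map_ne_zero_of_finrank_lt {K M P N : Type*} [Field K]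
    [AddCommGroup M] [Module K M] [AddCommGroup P] [Module K P] [AddCommGroup N] [Module K N]
    [FiniteDimensional K P] [FiniteDimensional K N] (F : Submodule K M) (ρ : M →ₗ[K] P)
    (L : P →ₗ[K] N) (h : finrank K N < finrank K (F.map ρ)) :
    ∃ f ∈ F, ρ f ≠ 0 ∧ L (ρ f) = 0 := by
  obtain ⟨y, hy, hy0⟩ := Submodule.ne_bot_iff _ |>.1
    (LinearMap.ker_ne_bot_of_finrank_lt (f := L ∘ₗ (F.map ρ).subtype) h)
  obtain ⟨f, hf, hfy⟩ := Submodule.mem_map.1 y.2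
  refine ⟨f, hf, ?_, ?_⟩ <;> rw [hfy]
  exacts [fun h => hy0 (Subtype.ext h), hy]

lemma Fin.sum_univ_eq_add_sum_erase_zero {M : Type*} [AddCommMonoid M] {b : ℕ} [NeZero b]
    (g : Fin b → M) :
    ∑ ℓ, g ℓ = g 0 + ∑ ℓ ∈ univ.erase 0, g ℓ :=
  (add_sum_erase _ _ (mem_univ _)).symm

lemma Fin.cast_card_univ_erase_zero {b : ℕ} [NeZero b] :
    (#(univ.erase (0 : Fin b)) : ℝ) = b - 1 := by
  rw [card_erase_of_mem (mem_univ _), card_univ, Fintype.card_fin, Nat.cast_sub NeZero.one_le,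
    Nat.cast_one]

lemma Finset.sum_sub_sq {ι : Type*} (s : Finset ι) (y : ι → ℝ) (c : ℝ) :
    ∑ i ∈ s, (y i - c) ^ 2 = ∑ i ∈ s, y i ^ 2 - 2 * c * ∑ i ∈ s, y i + #s * c ^ 2 := by
  simp only [sub_sq, sum_add_distrib, sum_sub_distrib, ← sum_mul, ← mul_sum, sum_const,
    nsmul_eq_mul]
  ring

lemma sq_sub_div_le_sum_sq (g : ℕ → ℝ) (n : ℕ) :
    (g n - g 0) ^ 2 / n ≤ ∑ i ∈ range n, (g (i + 1) - g i) ^ 2 := by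
  rcases n.eq_zero_or_pos with rfl | hn
  · simp
  rw [div_le_iff₀ (by exact_mod_cast hn), ← sum_range_sub, mul_comm]
  simpa using sq_sum_le_card_mul_sum_sq (s := range n) (f := fun i => g (i + 1) - g i)

section Steklov

variable {V : Type*} [Fintype V]

lemma dirichletEnergy_nonneg (G : SimpleGraph V) (f : V → ℝ) : 0 ≤ dirichletEnergy G f := by
  unfold dirichletEnergy
  refine div_nonneg (sum_nonneg fun x _ => sum_nonneg fun y _ => ?_) zero_le_two
  split_ifs <;> positivity

lemma dirichletEnergy_eq_sum_parent (G : SimpleGraph V) (parent : V → V)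
    (hG : ∀ x y, G.Adj x y ↔ x ≠ y ∧ (parent x = y ∨ parent y = x)) (depth : V → ℕ)
    (hdepth : ∀ x, parent x ≠ x → depth (parent x) < depth x) (f : V → ℝ) :
    dirichletEnergy G f = ∑ x, (f x - f (parent x)) ^ 2 := by
  have hsplit : ∀ x y, (if G.Adj x y then (f x - f y) ^ 2 else 0) =
      (if parent x = y then (f x - f y) ^ 2 else 0) +
        (if parent y = x then (f y - f x) ^ 2 else 0) := by
    intro x y
    simp only [hG]
    by_cases hxy : x = y
    · subst hxy; simp
    by_cases h₁ : parent x = y <;> by_cases h₂ : parent y = x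
    · have hx := hdepth x (h₁.trans_ne (Ne.symm hxy))
      have hy := hdepth y (h₂.trans_ne hxy)
      rw [h₁] at hx
      rw [h₂] at hy
      omega
    · simp [hxy, h₁, h₂]
    · simp [hxy, h₁, h₂, sub_sq_comm (f x)]
    · simp [h₁, h₂]
  unfold dirichletEnergy
  simp only [hsplit, sum_add_distrib]
  rw [sum_comm (f := fun x y => if parent y = x then (f y - f x) ^ 2 else 0)]
  simp only [sum_ite_eq, mem_univ, if_true, add_self_div_two]

lemma steklovEig_map_eq {ι : Type*} [Fintype ι] (G : SimpleGraph V) (e : ι ↪ V) (k : ℕ)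
    (σ : ℝ)
    (hup : ∃ F : Submodule ℝ (V → ℝ), finrank ℝ (F.map (LinearMap.funLeft ℝ ℝ e)) = k ∧
      ∀ f ∈ F, dirichletEnergy G f ≤ σ * ∑ i, f (e i) ^ 2)
    (hlow : ∀ F : Submodule ℝ (V → ℝ), finrank ℝ (F.map (LinearMap.funLeft ℝ ℝ e)) = k →
      ∃ f ∈ F, f ∘ e ≠ 0 ∧ σ * ∑ i, f (e i) ^ 2 ≤ dirichletEnergy G f) :
    steklovEig G (univ.map e) k = σ := by
  let eB : ι ≃ {v // v ∈ univ.map e} :=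
    Equiv.ofBijective (fun i => ⟨e i, mem_map_of_mem _ (mem_univ i)⟩)
      ⟨fun i j h => e.injective (congrArg Subtype.val h),
        fun ⟨v, hv⟩ => by obtain ⟨i, -, rfl⟩ := mem_map.1 hv; exact ⟨i, rfl⟩⟩
  have hrank : ∀ F : Submodule ℝ (V → ℝ),
      finrank ℝ (F.map (LinearMap.funLeft ℝ ℝ (fun x : {v // v ∈ univ.map e} => (x : V)))) =
        finrank ℝ (F.map (LinearMap.funLeft ℝ ℝ e)) := by
    intro F
    have : LinearMap.funLeft ℝ ℝ e = (LinearEquiv.funCongrLeft ℝ ℝ eB).toLinearMap ∘ₗ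
        LinearMap.funLeft ℝ ℝ (fun x : {v // v ∈ univ.map e} => (x : V)) := rfl
    rw [this, Submodule.map_comp, LinearEquiv.finrank_map_eq]
  have hlb : ∀ t, (∃ F : Submodule ℝ (V → ℝ), finrank ℝ (F.map (LinearMap.funLeft ℝ ℝ e)) = k ∧
      ∀ f ∈ F, dirichletEnergy G f ≤ t * ∑ i, f (e i) ^ 2) → σ ≤ t := by
    rintro t ⟨F, hF, hFt⟩
    obtain ⟨f, hf, hne, hσ⟩ := hlow F hF
    have hpos : 0 < ∑ i, f (e i) ^ 2 := by
      refine lt_of_le_of_ne (sum_nonneg fun i _ => sq_nonneg _) fun h => hne (funext fun i => ?_)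
      simpa using (sum_eq_zero_iff_of_nonneg fun i _ => sq_nonneg (f (e i))).1 h.symm i
    exact le_of_mul_le_mul_right (hσ.trans (hFt f hf)) hpos
  obtain ⟨F, hF, hFσ⟩ := hup
  unfold steklovEig
  simp only [hrank, sum_map]
  exact le_antisymm (csInf_le ⟨σ, hlb⟩ ⟨F, hF, hFσ⟩) (le_csInf ⟨σ, F, hF, hFσ⟩ hlb)

end Steklov

namespace AlmostFork

variable {b r : ℕ}

/-- The vertex at distance `n` from the centre along leg `ℓ`; meaningful for
`n ≤ legLength r ℓ`, leg `0` being the long one, which ends at the tip `inr true`. -/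
def leg (r : ℕ) (ℓ : Fin b) : ℕ → (Fin b × Fin r) ⊕ Bool
  | 0 => inr false
  | n + 1 => if h : n < r then inl (ℓ, ⟨n, h⟩) else inr true

def legLength (r : ℕ) (ℓ : Fin b) : ℕ := if (ℓ : ℕ) = 0 then r + 1 else r

def legEnd (r : ℕ) (ℓ : Fin b) : (Fin b × Fin r) ⊕ Bool := leg r ℓ (legLength r ℓ)

def parent [NeZero b] : (Fin b × Fin r) ⊕ Bool → (Fin b × Fin r) ⊕ Bool
  | inl (ℓ, i) => leg r ℓ i
  | inr true => leg r 0 r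
  | inr false => inr false

def depth : (Fin b × Fin r) ⊕ Bool → ℕ
  | inl (_, i) => i + 1
  | inr true => r + 1
  | inr false => 0

lemma leg_eq (ℓ : Fin b) (n : ℕ) : leg r ℓ n =
    if n = 0 then inr false else if h : n - 1 < r then inl (ℓ, ⟨n - 1, h⟩) else inr true := by
  cases n <;> simp [leg]

lemma legLength_pos (hr : 0 < r) (ℓ : Fin b) : 0 < legLength r ℓ := by
  unfold legLength
  split_ifs <;> omega

lemma legLength_zero [NeZero b] : legLength r (0 : Fin b) = r + 1 := by
  simp [legLength]

lemma legLength_of_ne_zero [NeZero b] {ℓ : Fin b} (hℓ : ℓ ≠ 0) : legLength r ℓ = r := by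
  simp [legLength, Fin.val_ne_zero_iff.2 hℓ]

lemma legEnd_eq (hr : 0 < r) (ℓ : Fin b) : legEnd r ℓ =
    if (ℓ : ℕ) = 0 then inr true else inl (ℓ, ⟨r - 1, Nat.sub_lt hr one_pos⟩) := by
  unfold legEnd legLength
  split_ifs
  · simp [leg]
  · obtain ⟨n, rfl⟩ := Nat.exists_eq_add_one_of_ne_zero hr.ne'
    simp [leg]

lemma legEnd_injective (hr : 0 < r) :
    Function.Injective (legEnd r : Fin b → (Fin b × Fin r) ⊕ Bool) := by
  intro ℓ m h
  simp only [legEnd_eq hr] at h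
  split_ifs at h <;> simp_all [Fin.ext_iff]

lemma parent_leg_succ [NeZero b] {ℓ : Fin b} {n : ℕ} (hn : n < legLength r ℓ) :
    parent (leg r ℓ (n + 1)) = leg r ℓ n := by
  rcases ℓ with ⟨ℓ, hℓ⟩
  simp only [legLength] at hn
  by_cases h : n < r
  · simp [leg, h, parent]
  · obtain ⟨rfl, rfl⟩ : ℓ = 0 ∧ n = r := by split_ifs at hn <;> omega
    simp [leg, parent]

lemma depth_leg_le (ℓ : Fin b) (n : ℕ) : depth (leg r ℓ n) ≤ n := by
  rcases n with _ | n
  · simp [leg, depth]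
  · simp only [leg]
    split_ifs <;> simp [depth]
    omega

lemma depth_parent_lt [NeZero b] {x : (Fin b × Fin r) ⊕ Bool} (hx : x ≠ inr false) :
    depth (parent x) < depth x := by
  rcases x with ⟨ℓ, i⟩ | _ | _
  · exact (depth_leg_le ℓ i).trans_lt (Nat.lt_succ_self _)
  · exact absurd rfl hx
  · exact (depth_leg_le 0 r).trans_lt (Nat.lt_succ_self _)

lemma almostFork_adj_iff [NeZero b] (hr : 0 < r) (x y : (Fin b × Fin r) ⊕ Bool) :
    (almostFork b r).Adj x y ↔ x ≠ y ∧ (parent x = y ∨ parent y = x) := by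
  rcases x with ⟨⟨ℓ, hℓ⟩, ⟨i, hi⟩⟩ | _ | _ <;> rcases y with ⟨⟨m, hm⟩, ⟨j, hj⟩⟩ | _ | _ <;>
    simp only [almostFork, SimpleGraph.fromRel_adj, parent, leg_eq] <;> (try split_ifs) <;>
    simp [Fin.ext_iff] <;> omega

lemma parent_ne_legEnd [NeZero b] (hr : 0 < r) (w : (Fin b × Fin r) ⊕ Bool) (ℓ : Fin b) :
    parent w ≠ legEnd r ℓ := by
  rcases ℓ with ⟨ℓ, hℓ⟩
  rcases w with ⟨⟨m, hm⟩, ⟨j, hj⟩⟩ | _ | _ <;>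
    simp only [parent, legEnd_eq hr, leg_eq] <;> split_ifs <;> simp [Fin.ext_iff] <;> omega

theorem dirichletEnergy_almostFork [NeZero b] (hr : 0 < r) (f : (Fin b × Fin r) ⊕ Bool → ℝ) :
    dirichletEnergy (almostFork b r) f =
      ∑ ℓ, ∑ n ∈ range (legLength r ℓ), (f (leg r ℓ (n + 1)) - f (leg r ℓ n)) ^ 2 := by
  have hshort : ∀ ℓ, ∑ i : Fin r, (f (inl (ℓ, i)) - f (parent (inl (ℓ, i)))) ^ 2 =
      ∑ n ∈ range r, (f (leg r ℓ (n + 1)) - f (leg r ℓ n)) ^ 2 := by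
    intro ℓ
    rw [← Fin.sum_univ_eq_sum_range]
    exact sum_congr rfl fun i _ => by simp [leg, parent]
  have hlong : ∀ ℓ : Fin b,
      ∑ n ∈ range (legLength r ℓ), (f (leg r ℓ (n + 1)) - f (leg r ℓ n)) ^ 2 =
        ∑ n ∈ range r, (f (leg r ℓ (n + 1)) - f (leg r ℓ n)) ^ 2 +
          if ℓ = 0 then (f (inr true) - f (parent (inr true : (Fin b × Fin r) ⊕ Bool))) ^ 2
          else 0 := by
    intro ℓ
    simp only [legLength, Fin.val_eq_zero_iff]
    split_ifs with h
    · subst h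
      simp [sum_range_succ, leg, parent]
    · simp
  rw [dirichletEnergy_eq_sum_parent _ parent (almostFork_adj_iff hr) depth
      (fun x hx => depth_parent_lt fun h => hx (by rw [h]; rfl)),
    Fintype.sum_sum_type, Fintype.sum_prod_type, Fintype.sum_bool]
  simp only [hshort, hlong, sum_add_distrib, sum_ite_eq', mem_univ, if_true]
  simp [parent]

lemma legEnd_mem_leavesFinset [NeZero b] (hr : 0 < r) (ℓ : Fin b) :
    legEnd r ℓ ∈ leavesFinset (almostFork b r) := by
  simp only [leavesFinset, mem_filter, mem_univ, true_and,
    SimpleGraph.degree_eq_one_iff_existsUnique_adj, almostFork_adj_iff hr]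
  refine ⟨parent (legEnd r ℓ), ⟨(parent_ne_legEnd hr _ ℓ).symm, Or.inl rfl⟩, ?_⟩
  rintro w ⟨-, hw | hw⟩
  · exact hw.symm
  · exact absurd hw (parent_ne_legEnd hr w ℓ)

lemma exists_adj_adj_of_forall_legEnd_ne (hb : 2 ≤ b) (hr : 0 < r)
    {v : (Fin b × Fin r) ⊕ Bool} (hv : ∀ ℓ, legEnd r ℓ ≠ v) :
    ∃ u w, u ≠ w ∧ (almostFork b r).Adj v u ∧ (almostFork b r).Adj v w := by
  have : NeZero b := ⟨by omega⟩
  rcases v with ⟨ℓ, i⟩ | _ | _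
  · have hi : (i : ℕ) + 1 < legLength r ℓ := by
      have h := hv ℓ
      have := i.isLt
      rw [legEnd_eq hr] at h
      unfold legLength
      split_ifs at h ⊢
      · omega
      · simp only [ne_eq, inl.injEq, Prod.mk.injEq, true_and, Fin.ext_iff] at h
        omega
    have hchild : parent (leg r ℓ ((i : ℕ) + 2)) = (inl (ℓ, i) : (Fin b × Fin r) ⊕ Bool) := by
      rw [parent_leg_succ hi]
      simp [leg]
    have hw : leg r ℓ ((i : ℕ) + 2) ≠ inr false := fun h => by
      rw [h] at hchild
      exact absurd hchild (by simp [parent])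
    have hu := depth_parent_lt (x := (inl (ℓ, i) : (Fin b × Fin r) ⊕ Bool)) (by simp)
    have hw' := depth_parent_lt hw
    rw [hchild] at hw'
    refine ⟨parent (inl (ℓ, i)), leg r ℓ ((i : ℕ) + 2), fun h => by rw [h] at hu; omega, ?_, ?_⟩
    · exact (almostFork_adj_iff hr _ _).2 ⟨fun h => by rw [← h] at hu; omega, Or.inl rfl⟩
    · exact (almostFork_adj_iff hr _ _).2 ⟨fun h => by rw [h] at hw'; omega, Or.inr hchild⟩
  · refine ⟨inl (⟨0, by omega⟩, ⟨0, hr⟩), inl (⟨1, by omega⟩, ⟨0, hr⟩), by simp, ?_, ?_⟩ <;>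
      simp [almostFork_adj_iff hr, parent, leg]
  · exact absurd (by simp [legEnd, legLength, leg]) (hv 0)

variable (b r) in
def legEndEmbedding (hr : 0 < r) : Fin b ↪ (Fin b × Fin r) ⊕ Bool :=
  ⟨legEnd r, legEnd_injective hr⟩

@[simp]
lemma coe_legEndEmbedding (hr : 0 < r) : ⇑(legEndEmbedding b r hr) = legEnd r := rfl

lemma leavesFinset_almostFork (hb : 2 ≤ b) (hr : 0 < r) :
    leavesFinset (almostFork b r) = univ.map (legEndEmbedding b r hr) := by
  have : NeZero b := ⟨by omega⟩
  ext v
  simp only [mem_map, mem_univ, true_and, coe_legEndEmbedding]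
  refine ⟨fun hv => ?_, fun ⟨ℓ, hℓ⟩ => hℓ ▸ legEnd_mem_leavesFinset hr ℓ⟩
  by_contra! h
  obtain ⟨u, w, huw, hu, hw⟩ := exists_adj_adj_of_forall_legEnd_ne hb hr h
  simp only [leavesFinset, mem_filter, mem_univ, true_and,
    SimpleGraph.degree_eq_one_iff_existsUnique_adj] at hv
  obtain ⟨x, -, hx⟩ := hv
  exact huw ((hx u hu).trans (hx w hw).symm)

/-- The energy of the star obtained by replacing leg `ℓ` with one edge of conductance
`1 / legLength r ℓ`, for centre value `c` and leaf values `y`. -/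
noncomputable def starEnergy (r : ℕ) (c : ℝ) (y : Fin b → ℝ) : ℝ :=
  ∑ ℓ, (y ℓ - c) ^ 2 / legLength r ℓ

lemma starEnergy_le_dirichletEnergy [NeZero b] (hr : 0 < r) (f : (Fin b × Fin r) ⊕ Bool → ℝ) :
    starEnergy r (f (inr false)) (fun ℓ => f (legEnd r ℓ)) ≤
      dirichletEnergy (almostFork b r) f := by
  rw [dirichletEnergy_almostFork hr]
  exact sum_le_sum fun ℓ _ => sq_sub_div_le_sum_sq (fun n => f (leg r ℓ n)) (legLength r ℓ)

noncomputable def legAffine [NeZero b] (a : ℝ) (y : Fin b → ℝ) : (Fin b × Fin r) ⊕ Bool → ℝ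
  | inl (ℓ, i) => a + (y ℓ - a) * ((i : ℕ) + 1) / legLength r ℓ
  | inr false => a
  | inr true => y 0

lemma legAffine_leg [NeZero b] (a : ℝ) (y : Fin b → ℝ) {ℓ : Fin b} {n : ℕ}
    (hn : n ≤ legLength r ℓ) :
    legAffine a y (leg r ℓ n) = a + (y ℓ - a) * n / legLength r ℓ := by
  rcases n with _ | n
  · simp [leg, legAffine]
  by_cases h : n < r
  · simp [leg, h, legAffine]
  · obtain ⟨hℓ, rfl⟩ : (ℓ : ℕ) = 0 ∧ n = r := by
      unfold legLength at hn
      split_ifs at hn <;> omega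
    obtain rfl : ℓ = 0 := Fin.ext hℓ
    simp [leg, legAffine, legLength]
    field_simp
    ring

lemma legAffine_legEnd [NeZero b] (hr : 0 < r) (a : ℝ) (y : Fin b → ℝ) (ℓ : Fin b) :
    legAffine a y (legEnd r ℓ) = y ℓ := by
  have := legLength_pos hr ℓ
  rw [legEnd, legAffine_leg a y le_rfl]
  field_simp
  ring

lemma dirichletEnergy_legAffine [NeZero b] (hr : 0 < r) (a : ℝ) (y : Fin b → ℝ) :
    dirichletEnergy (almostFork b r) (legAffine a y) = starEnergy r a y := by
  rw [dirichletEnergy_almostFork hr, starEnergy]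
  refine sum_congr rfl fun ℓ _ => ?_
  have hL : (legLength r ℓ : ℝ) ≠ 0 := by exact_mod_cast (legLength_pos hr ℓ).ne'
  have hstep : ∀ n ∈ range (legLength r ℓ),
      (legAffine a y (leg r ℓ (n + 1)) - legAffine a y (leg r ℓ n)) ^ 2 =
        ((y ℓ - a) / legLength r ℓ) ^ 2 := by
    intro n hn
    have hn := mem_range.1 hn
    rw [legAffine_leg a y hn, legAffine_leg a y hn.le]
    push_cast
    ring
  rw [sum_congr rfl hstep, sum_const, card_range, nsmul_eq_mul]
  field_simp

noncomputable def legLinear [NeZero b] : (Fin b → ℝ) →ₗ[ℝ] ((Fin b × Fin r) ⊕ Bool → ℝ) where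
  toFun := legAffine 0
  map_add' y z := by
    funext v
    rcases v with ⟨ℓ, i⟩ | _ | _ <;> simp [legAffine]
    ring
  map_smul' t y := by
    funext v
    rcases v with ⟨ℓ, i⟩ | _ | _ <;> simp [legAffine]
    ring

lemma smul_one_add_smul_legAffine [NeZero b] (a t : ℝ) (y : Fin b → ℝ) :
    a • (1 : (Fin b × Fin r) ⊕ Bool → ℝ) + t • legAffine 0 y =
      legAffine a (fun ℓ => a + t * y ℓ) := by
  funext v
  rcases v with ⟨ℓ, i⟩ | _ | _ <;> simp [legAffine]
  ring

lemma starEnergy_eq [NeZero b] (c : ℝ) (y : Fin b → ℝ) :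
    starEnergy r c y = (y 0 - c) ^ 2 / (r + 1) + ∑ ℓ ∈ univ.erase 0, (y ℓ - c) ^ 2 / r := by
  rw [starEnergy, Fin.sum_univ_eq_add_sum_erase_zero, legLength_zero]
  congr 1
  · push_cast
    ring
  · exact sum_congr rfl fun ℓ hℓ => by rw [legLength_of_ne_zero (ne_of_mem_erase hℓ)]

lemma starEnergy_ge_of_sum_eq_zero [NeZero b] (hr : 0 < r) (c : ℝ) {y : Fin b → ℝ}
    (hy : ∑ ℓ, y ℓ = 0) :
    b / (b * (r + 1) - 1) * ∑ ℓ, y ℓ ^ 2 ≤ starEnergy r c y := by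
  rw [starEnergy_eq, Fin.sum_univ_eq_add_sum_erase_zero, ← sum_div, sum_sub_sq,
    Fin.cast_card_univ_erase_zero]
  rw [Fin.sum_univ_eq_add_sum_erase_zero] at hy
  set S := ∑ ℓ ∈ univ.erase 0, y ℓ
  set Q := ∑ ℓ ∈ univ.erase 0, y ℓ ^ 2
  have hCS : S ^ 2 ≤ (b - 1) * Q :=
    Fin.cast_card_univ_erase_zero (b := b) ▸ sq_sum_le_card_mul_sum_sq
  have hr' : (0 : ℝ) < r := by exact_mod_cast hr
  have hb : (1 : ℝ) ≤ b := by exact_mod_cast NeZero.one_le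
  have hB : 0 < (b : ℝ) * (r + 1) - 1 := by nlinarith
  rw [show y 0 = -S by linarith, div_mul_eq_mul_div, div_le_iff₀ hB,
    div_add_div _ _ (by positivity) hr'.ne', div_mul_eq_mul_div, le_div_iff₀ (by positivity)]
  -- cleared of denominators, the two sides differ by
  -- `(r + 1) * ((b - 1) * Q - S ^ 2) + (S - (b * (r + 1) - 1) * c) ^ 2`
  nlinarith [mul_nonneg (by positivity : (0 : ℝ) ≤ r + 1) (sub_nonneg.2 hCS),
    sq_nonneg (S - (b * (r + 1) - 1) * c)]

lemma starEnergy_ge_of_sum_eq_zero_of_eq_zero [NeZero b] (hr : 0 < r) (c : ℝ)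
    {y : Fin b → ℝ} (hy : ∑ ℓ, y ℓ = 0) (hy0 : y 0 = 0) :
    1 / r * ∑ ℓ, y ℓ ^ 2 ≤ starEnergy r c y := by
  rw [starEnergy_eq, Fin.sum_univ_eq_add_sum_erase_zero, hy0, ← sum_div, sum_sub_sq,
    Fin.cast_card_univ_erase_zero]
  rw [Fin.sum_univ_eq_add_sum_erase_zero, hy0, zero_add] at hy
  have hb : (1 : ℝ) ≤ b := by exact_mod_cast NeZero.one_le
  rw [hy, one_div_mul_eq_div]
  have hc : 0 ≤ (0 - c) ^ 2 / (r + 1) := by positivity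
  have hQ : (0 ^ 2 + ∑ ℓ ∈ univ.erase 0, y ℓ ^ 2) / r ≤
      (∑ ℓ ∈ univ.erase 0, y ℓ ^ 2 - 2 * c * 0 + (b - 1) * c ^ 2) / r := by
    refine div_le_div_of_nonneg_right ?_ (Nat.cast_nonneg r)
    nlinarith [sq_nonneg c]
  linarith

lemma starEnergy_zero_le (hr : 0 < r) (y : Fin b → ℝ) :
    starEnergy r 0 y ≤ 1 / r * ∑ ℓ, y ℓ ^ 2 := by
  rw [starEnergy, mul_sum]
  refine sum_le_sum fun ℓ _ => ?_
  rw [sub_zero, one_div_mul_eq_div]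
  gcongr
  unfold legLength
  split_ifs <;> omega

/-- Leaf values of the `σ₂`-eigenfunction: it is affine on the legs with slope `-(b - 1)` on the
long leg and `1` on the others, so the slopes sum to zero (harmonicity at the centre). -/
noncomputable def secondEigvec (b r : ℕ) (ℓ : Fin b) : ℝ :=
  if (ℓ : ℕ) = 0 then -((b - 1) * (r + 1)) else r

lemma starEnergy_secondEigvec_le [NeZero b] (hr : 0 < r) (a t : ℝ) :
    starEnergy r a (fun ℓ => a + t * secondEigvec b r ℓ) ≤
      b / (b * (r + 1) - 1) * ∑ ℓ, (a + t * secondEigvec b r ℓ) ^ 2 := by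
  have hφ : ∀ ℓ ∈ univ.erase (0 : Fin b), secondEigvec b r ℓ = r := fun ℓ hℓ => by
    simp [secondEigvec, Fin.val_ne_zero_iff.2 (ne_of_mem_erase hℓ)]
  have hE : ∑ ℓ ∈ univ.erase 0, (a + t * secondEigvec b r ℓ - a) ^ 2 / r =
      (b - 1) * ((t * r) ^ 2 / r) := by
    rw [sum_congr rfl fun ℓ hℓ => by rw [hφ ℓ hℓ, add_sub_cancel_left], sum_const, nsmul_eq_mul,
      Fin.cast_card_univ_erase_zero]
  have hN : ∑ ℓ ∈ univ.erase 0, (a + t * secondEigvec b r ℓ) ^ 2 =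
      (b - 1) * (a + t * r) ^ 2 := by
    rw [sum_congr rfl fun ℓ hℓ => by rw [hφ ℓ hℓ], sum_const, nsmul_eq_mul,
      Fin.cast_card_univ_erase_zero]
  rw [starEnergy_eq, Fin.sum_univ_eq_add_sum_erase_zero, hE, hN]
  simp only [secondEigvec, Fin.val_zero, if_true]
  have hr' : (0 : ℝ) < r := by exact_mod_cast hr
  have hb : (1 : ℝ) ≤ b := by exact_mod_cast NeZero.one_le
  have hB : 0 < (b : ℝ) * (r + 1) - 1 := by nlinarith
  rw [div_mul_eq_mul_div, le_div_iff₀ hB]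
  field_simp
  nlinarith [sq_nonneg (b * a - (b - 1) * t)]

theorem steklovEig_almostFork_one (hb : 2 ≤ b) (hr : 0 < r) :
    steklovEig (almostFork b r) (leavesFinset (almostFork b r)) 1 = 0 := by
  have : NeZero b := ⟨by omega⟩
  rw [leavesFinset_almostFork hb hr]
  refine steklovEig_map_eq _ _ _ _ ⟨Submodule.span ℝ {1}, ?_, ?_⟩ fun F hF => ?_
  · rw [Submodule.map_span, Set.image_singleton]
    exact finrank_span_singleton (by simp [funext_iff, LinearMap.funLeft_apply])
  · intro f hf
    obtain ⟨a, rfl⟩ := Submodule.mem_span_singleton.1 hf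
    simp [dirichletEnergy]
  · obtain ⟨f, hf, hne, -⟩ := F.exists_mem_map_ne_zero_of_finrank_lt
      (LinearMap.funLeft ℝ ℝ (legEndEmbedding b r hr))
      (0 : (Fin b → ℝ) →ₗ[ℝ] (Fin 0 → ℝ)) (by rw [hF]; simp)
    exact ⟨f, hf, hne, by simpa using dirichletEnergy_nonneg _ f⟩

theorem steklovEig_almostFork_two (hb : 2 ≤ b) (hr : 0 < r) :
    steklovEig (almostFork b r) (leavesFinset (almostFork b r)) 2 =
      b / (b * (r + 1) - 1) := by
  have : NeZero b := ⟨by omega⟩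
  rw [leavesFinset_almostFork hb hr]
  let ψ : Fin 2 → (Fin b × Fin r) ⊕ Bool → ℝ := ![1, legAffine 0 (secondEigvec b r)]
  refine steklovEig_map_eq _ _ _ _ ⟨Submodule.span ℝ (Set.range ψ), ?_, ?_⟩ fun F hF => ?_
  · have hψ : LinearMap.funLeft ℝ ℝ (legEndEmbedding b r hr) ∘ ψ = ![1, secondEigvec b r] := by
      ext i ℓ
      fin_cases i <;> simp [ψ, LinearMap.funLeft_apply, legAffine_legEnd hr]
    rw [Submodule.map_span, ← Set.range_comp, hψ, finrank_span_eq_card, Fintype.card_fin]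
    refine LinearIndependent.pair_iff.2 fun s t hst => ?_
    have h0 := congrFun hst 0
    have h1 := congrFun hst ⟨1, by omega⟩
    simp [secondEigvec] at h0 h1
    have hb' : (2 : ℝ) ≤ b := by exact_mod_cast hb
    have ht : t * (r + (b - 1) * (r + 1)) = 0 := by linarith
    rw [mul_eq_zero, or_iff_left (by nlinarith)] at ht
    exact ⟨by simpa [ht] using h1, ht⟩
  · intro f hf
    obtain ⟨c, rfl⟩ := (Submodule.mem_span_range_iff_exists_fun ℝ).1 hf
    simp only [Fin.sum_univ_two, ψ, Matrix.cons_val_zero, Matrix.cons_val_one,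
      smul_one_add_smul_legAffine, dirichletEnergy_legAffine hr, coe_legEndEmbedding,
      legAffine_legEnd hr]
    exact starEnergy_secondEigvec_le hr _ _
  · obtain ⟨f, hf, hne, hsum⟩ := F.exists_mem_map_ne_zero_of_finrank_lt
      (LinearMap.funLeft ℝ ℝ (legEndEmbedding b r hr)) (∑ ℓ, LinearMap.proj ℓ)
      (by rw [hF]; simp)
    refine ⟨f, hf, hne, le_trans ?_ (starEnergy_le_dirichletEnergy hr f)⟩
    exact starEnergy_ge_of_sum_eq_zero hr _ (by simpa using hsum)

theorem steklovEig_almostFork_of_three_le (hb : 2 ≤ b) (hr : 0 < r) {k : ℕ} (hk : 3 ≤ k)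
    (hkb : k ≤ b) :
    steklovEig (almostFork b r) (leavesFinset (almostFork b r)) k = 1 / r := by
  have : NeZero b := ⟨by omega⟩
  rw [leavesFinset_almostFork hb hr]
  obtain ⟨v, hv⟩ := exists_linearIndependent_of_le_finrank (R := ℝ) (M := Fin b → ℝ)
    (by simpa using hkb)
  refine steklovEig_map_eq _ _ _ _
    ⟨(Submodule.span ℝ (Set.range v)).map legLinear, ?_, ?_⟩ fun F hF => ?_
  · have hid : LinearMap.funLeft ℝ ℝ (legEndEmbedding b r hr) ∘ₗ legLinear = LinearMap.id := by
      ext y ℓ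
      simp [LinearMap.funLeft_apply, legLinear, legAffine_legEnd hr]
    rw [← Submodule.map_comp, hid, Submodule.map_id, finrank_span_eq_card hv, Fintype.card_fin]
  · rintro f ⟨y, -, rfl⟩
    simp only [legLinear, LinearMap.coe_mk, AddHom.coe_mk, dirichletEnergy_legAffine hr,
      coe_legEndEmbedding, legAffine_legEnd hr]
    exact starEnergy_zero_le hr y
  · obtain ⟨f, hf, hne, hL⟩ := F.exists_mem_map_ne_zero_of_finrank_lt
      (LinearMap.funLeft ℝ ℝ (legEndEmbedding b r hr))
      ((∑ ℓ, LinearMap.proj ℓ).prod (LinearMap.proj 0)) (by rw [hF]; simp; omega)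
    obtain ⟨hsum, h0⟩ := Prod.mk_eq_zero.1 hL
    refine ⟨f, hf, hne, le_trans ?_ (starEnergy_le_dirichletEnergy hr f)⟩
    exact starEnergy_ge_of_sum_eq_zero_of_eq_zero hr _ (by simpa using hsum) (by simpa using h0)

end AlmostFork

/-- Let `b ≥ 2` and `r ≥ 1` be integers, and let `T = AF(b,r)` be the almost
fork graph with leaves as boundary. Then the Steklov eigenvalues of `T` are `σ₁ = 0`,
`σ₂ = b/(b(r+1)-1)`, and `σₖ = 1/r` for all `3 ≤ k ≤ b`. -/
theorem stmt9 (b r : ℕ) (hb : 2 ≤ b) (hr : 1 ≤ r) :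
    steklovEig (almostFork b r) (leavesFinset (almostFork b r)) 1 = 0 ∧
    steklovEig (almostFork b r) (leavesFinset (almostFork b r)) 2 =
      (b : ℝ) / ((b : ℝ) * ((r : ℝ) + 1) - 1) ∧
    ∀ k : ℕ, 3 ≤ k → k ≤ b →
      steklovEig (almostFork b r) (leavesFinset (almostFork b r)) k = 1 / (r : ℝ) :=
  ⟨AlmostFork.steklovEig_almostFork_one hb hr, AlmostFork.steklovEig_almostFork_two hb hr,
    fun _ hk hkb => AlmostFork.steklovEig_almostFork_of_three_le hb hr hk hkb⟩
end

section
/- Let T be a tree with exactly b ≥ 2 leaves and n vertices, and let r ≥ 1 be an integer. If the diameter of T is at most 2r, then n ≤ br + 1; if the diameter of T is at most 2r−1, then n ≤ b(r−1) + 2. -/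
open scoped BigOperators
open Classical

/-!
If the diameter is at most `2k`, the midpoint `c` of a diametral path has eccentricity at most `k`
(in a tree every vertex `x` sees `c` on its path to one end of the diametral path). Every vertex
`v ≠ c` lies on the geodesic from `c` to some leaf (follow the geodesic from `c` through `v` as far
as it goes), at distance between `1` and `k` from `c`, and a vertex on the geodesic from `c` to a
leaf is determined by its distance from `c`; hence `n - 1 ≤ b k`. If the diameter is `2k + 1`, the
central edge `c₁c₂` plays the role of `c`: every other vertex lies on the geodesic from its nearer
end of that edge to a leaf nearer to the same end, within distance `k`, so `n - 2 ≤ b k`.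
-/

open Finset

namespace SimpleGraph

variable {V : Type*} {G : SimpleGraph V} {u v c x y : V}

lemma Connected.dist_getVert_of_length_eq_dist (hG : G.Connected) {p : G.Walk u v}
    (hp : p.length = G.dist u v) {i : ℕ} (hi : i ≤ p.length) :
    G.dist u (p.getVert i) = i ∧ G.dist (p.getVert i) v = G.dist u v - i := by
  have hu := dist_le (p.take i)
  have hv := dist_le (p.drop i)
  have htri : G.dist u v ≤ G.dist u (p.getVert i) + G.dist (p.getVert i) v := hG.dist_triangle
  simp only [Walk.take_length, Walk.drop_length] at hu hv
  omega

lemma Connected.dist_add_dist_eq_of_mem_support (hG : G.Connected) {p : G.Walk u v}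
    (hp : p.length = G.dist u v) (hc : c ∈ p.support) :
    G.dist u c + G.dist c v = G.dist u v := by
  obtain ⟨i, rfl, hi⟩ := Walk.mem_support_iff_exists_getVert.mp hc
  have := hG.dist_getVert_of_length_eq_dist hp hi
  omega

lemma Connected.exists_walk_length_eq_dist_getVert_eq (hG : G.Connected)
    (hc : G.dist u c + G.dist c v = G.dist u v) :
    ∃ p : G.Walk u v, p.length = G.dist u v ∧ p.getVert (G.dist u c) = c := by
  obtain ⟨p, hp⟩ := hG.exists_walk_length_eq_dist u c
  obtain ⟨q, hq⟩ := hG.exists_walk_length_eq_dist c v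
  refine ⟨p.append q, by rw [Walk.length_append]; omega, ?_⟩
  rw [Walk.getVert_append', if_pos hp.ge, ← hp, Walk.getVert_length]

namespace IsTree

lemma eq_of_dist_add_dist_eq (hG : G.IsTree) (hx : G.dist u x + G.dist x v = G.dist u v)
    (hy : G.dist u y + G.dist y v = G.dist u v) (hxy : G.dist u x = G.dist u y) : x = y := by
  obtain ⟨p, hp, hpx⟩ := hG.connected.exists_walk_length_eq_dist_getVert_eq hx
  obtain ⟨q, hq, hqy⟩ := hG.connected.exists_walk_length_eq_dist_getVert_eq hy
  have hpq : p = q := (hG.existsUnique_path u v).unique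
    (p.isPath_of_length_eq_dist hp) (q.isPath_of_length_eq_dist hq)
  rw [← hpx, ← hqy, hpq, hxy]

lemma dist_add_dist_eq_or (hG : G.IsTree) (hc : G.dist u c + G.dist c v = G.dist u v) (x : V) :
    G.dist u c + G.dist c x = G.dist u x ∨ G.dist x c + G.dist c v = G.dist x v := by
  obtain ⟨p, hp, hpc⟩ := hG.connected.exists_walk_length_eq_dist_getVert_eq hc
  obtain ⟨q, hq⟩ := hG.connected.exists_walk_length_eq_dist u x
  obtain ⟨r, hr⟩ := hG.connected.exists_walk_length_eq_dist x v
  have hbypass : (q.append r).bypass = p := (hG.existsUnique_path u v).unique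
    (q.append r).bypass_isPath (p.isPath_of_length_eq_dist hp)
  have hmem : c ∈ (q.append r).support := (q.append r).support_bypass_subset_support <| by
    rw [hbypass, ← hpc]
    exact p.getVert_mem_support _
  rw [Walk.support_append, List.mem_append] at hmem
  exact hmem.imp (hG.connected.dist_add_dist_eq_of_mem_support hq)
    fun h ↦ hG.connected.dist_add_dist_eq_of_mem_support hr (List.mem_of_mem_tail h)

variable [Fintype V]

lemma exists_degree_eq_one_dist_add_dist_eq (hG : G.IsTree) (hv : v ≠ c) :
    ∃ ℓ, G.degree ℓ = 1 ∧ G.dist c v + G.dist v ℓ = G.dist c ℓ := by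
  obtain ⟨ℓ, hℓ, hmax⟩ := ({w | G.dist c v + G.dist v w = G.dist c w} : Finset V)
    |>.exists_max_image (G.dist c) ⟨v, by simp⟩
  simp only [mem_filter, mem_univ, true_and] at hℓ hmax
  have hcv := hG.connected.pos_dist_of_ne hv.symm
  -- a neighbour of `ℓ` farther from `c` would again lie beyond `v`, against the choice of `ℓ`
  have hparent : ∀ w, G.Adj ℓ w → G.dist c w + G.dist w ℓ = G.dist c ℓ := by
    intro w hw
    rw [dist_eq_one_iff_adj.mpr hw.symm]
    rcases hG.dist_eq_dist_add_one_of_adj c hw with h | h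
    · omega
    · have hvw : G.dist v w ≤ G.dist v ℓ + G.dist ℓ w := hG.connected.dist_triangle
      have hcw : G.dist c w ≤ G.dist c v + G.dist v w := hG.connected.dist_triangle
      have := hmax w (by rw [dist_eq_one_iff_adj.mpr hw] at hvw; omega)
      omega
  refine ⟨ℓ, le_antisymm ?_ ((hG.connected c ℓ).degree_pos_right ?_), hℓ⟩
  · rw [← card_neighborFinset_eq_degree, card_le_one]
    intro w hw w' hw'
    rw [mem_neighborFinset] at hw hw'
    have h := hparent w hw
    have h' := hparent w' hw'
    refine hG.eq_of_dist_add_dist_eq h h' ?_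
    rw [dist_eq_one_iff_adj.mpr hw.symm] at h
    rw [dist_eq_one_iff_adj.mpr hw'.symm] at h'
    omega
  · rintro rfl
    rw [dist_self] at hℓ
    omega

lemma card_filter_dist_add_dist_eq_le (hG : G.IsTree) (c ℓ : V) (s : Finset ℕ) :
    #{v | G.dist c v + G.dist v ℓ = G.dist c ℓ ∧ G.dist c v ∈ s} ≤ #s :=
  card_le_card_of_injOn (G.dist c) (fun _ hv ↦ (mem_filter.mp hv).2.2)
    fun _ hv _ hw h ↦ hG.eq_of_dist_add_dist_eq (mem_filter.mp hv).2.1 (mem_filter.mp hw).2.1 h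

lemma card_le_of_forall_mem_or_exists_leaf (hG : G.IsTree) (S : Finset V) (center : V → V)
    (k : ℕ) (hcover : ∀ v ∉ S, ∃ ℓ ∈ leavesFinset G,
      G.dist (center ℓ) v + G.dist v ℓ = G.dist (center ℓ) ℓ ∧ G.dist (center ℓ) v ∈ Icc 1 k) :
    Fintype.card V ≤ #(leavesFinset G) * k + #S := by
  set segment : V → Finset V := fun ℓ ↦
    {v | G.dist (center ℓ) v + G.dist v ℓ = G.dist (center ℓ) ℓ ∧ G.dist (center ℓ) v ∈ Icc 1 k}
  have hsub : (univ : Finset V) ⊆ (leavesFinset G).biUnion segment ∪ S := by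
    intro v _
    by_cases hv : v ∈ S
    · exact mem_union_right _ hv
    · obtain ⟨ℓ, hℓ, h⟩ := hcover v hv
      exact mem_union_left _ (mem_biUnion.mpr ⟨ℓ, hℓ, mem_filter.mpr ⟨mem_univ _, h⟩⟩)
  have hsegment : ∀ ℓ ∈ leavesFinset G, #(segment ℓ) ≤ k := fun ℓ _ ↦
    (hG.card_filter_dist_add_dist_eq_le _ ℓ _).trans (by simp)
  calc Fintype.card V = #(univ : Finset V) := card_univ.symm
    _ ≤ #((leavesFinset G).biUnion segment) + #S := (card_le_card hsub).trans (card_union_le _ _)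
    _ ≤ #(leavesFinset G) * k + #S := by grw [card_biUnion_le_card_mul _ _ _ hsegment]

lemma card_le_of_forall_dist_le (hG : G.IsTree) {k : ℕ} (hc : ∀ x, G.dist c x ≤ k) :
    Fintype.card V ≤ #(leavesFinset G) * k + 1 := by
  refine (hG.card_le_of_forall_mem_or_exists_leaf {c} (fun _ ↦ c) k fun v hv ↦ ?_).trans_eq
    (by rw [card_singleton])
  have hv : v ≠ c := by simpa using hv
  obtain ⟨ℓ, hℓ, hcvℓ⟩ := hG.exists_degree_eq_one_dist_add_dist_eq hv
  have hcv := hG.connected.pos_dist_of_ne hv.symm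
  exact ⟨ℓ, by simp [leavesFinset, hℓ], hcvℓ, mem_Icc.mpr ⟨hcv, hc v⟩⟩

lemma exists_degree_eq_one_of_adj (hG : G.IsTree) {c' : V} (hadj : G.Adj c' c)
    (hv : G.dist c' v = G.dist c v + 1) :
    ∃ ℓ, G.degree ℓ = 1 ∧ G.dist c v + G.dist v ℓ = G.dist c ℓ ∧
      G.dist c ℓ < G.dist c' ℓ := by
  have hvc' : v ≠ c' := by rintro rfl; rw [dist_self] at hv; omega
  obtain ⟨ℓ, hℓ, hc'vℓ⟩ := hG.exists_degree_eq_one_dist_add_dist_eq hvc'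
  have hcℓ : G.dist c ℓ ≤ G.dist c v + G.dist v ℓ := hG.connected.dist_triangle
  have hc'ℓ : G.dist c' ℓ ≤ G.dist c' c + G.dist c ℓ := hG.connected.dist_triangle
  rw [dist_eq_one_iff_adj.mpr hadj] at hc'ℓ
  exact ⟨ℓ, hℓ, by omega, by omega⟩

lemma card_le_of_adj_of_forall_dist_le (hG : G.IsTree) {c₁ c₂ : V} (hadj : G.Adj c₁ c₂)
    {k : ℕ} (hc : ∀ x, G.dist c₁ x ≤ k ∨ G.dist c₂ x ≤ k) :
    Fintype.card V ≤ #(leavesFinset G) * k + 2 := by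
  refine (hG.card_le_of_forall_mem_or_exists_leaf {c₁, c₂}
    (fun ℓ ↦ if G.dist c₁ ℓ < G.dist c₂ ℓ then c₁ else c₂) k fun v hv ↦ ?_).trans
    (by grw [card_insert_le, card_singleton])
  simp only [mem_insert, mem_singleton, not_or] at hv
  have hv₁ := hG.connected.pos_dist_of_ne (Ne.symm hv.1)
  have hv₂ := hG.connected.pos_dist_of_ne (Ne.symm hv.2)
  rcases hG.dist_eq_dist_add_one_of_adj v hadj with h | h <;>
    rw [G.dist_comm (u := v), G.dist_comm (u := v)] at h
  · obtain ⟨ℓ, hℓ, hbetween, hnear⟩ := hG.exists_degree_eq_one_of_adj hadj h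
    refine ⟨ℓ, by simp [leavesFinset, hℓ], ?_⟩
    rw [if_neg (by omega)]
    exact ⟨hbetween, mem_Icc.mpr ⟨hv₂, by have := hc v; omega⟩⟩
  · obtain ⟨ℓ, hℓ, hbetween, hnear⟩ := hG.exists_degree_eq_one_of_adj hadj.symm h
    refine ⟨ℓ, by simp [leavesFinset, hℓ], ?_⟩
    rw [if_pos hnear]
    exact ⟨hbetween, mem_Icc.mpr ⟨hv₁, by have := hc v; omega⟩⟩

lemma dist_getVert_le_max (hG : G.IsTree) (huv : G.dist u v = G.diam) {p : G.Walk u v}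
    (hp : p.length = G.dist u v) {i : ℕ} (hi : i ≤ p.length) (x : V) :
    G.dist (p.getVert i) x ≤ max i (G.diam - i) := by
  have := hG.connected.nonempty
  have hfin := connected_iff_ediam_ne_top.mp hG.connected
  have hux : G.dist u x ≤ G.diam := dist_le_diam hfin
  have hxv : G.dist x v ≤ G.diam := dist_le_diam hfin
  obtain ⟨hu, hv⟩ := hG.connected.dist_getVert_of_length_eq_dist hp hi
  have hbetween : G.dist u (p.getVert i) + G.dist (p.getVert i) v = G.dist u v := by omega
  rcases hG.dist_add_dist_eq_or hbetween x with h | h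
  · omega
  · rw [G.dist_comm] at h
    omega

lemma card_le_of_diam_le (hG : G.IsTree) {k : ℕ} (hD : G.diam ≤ 2 * k) :
    Fintype.card V ≤ #(leavesFinset G) * k + 1 := by
  have := hG.connected.nonempty
  obtain ⟨u, v, huv⟩ := G.exists_dist_eq_diam
  obtain ⟨p, hp⟩ := hG.connected.exists_walk_length_eq_dist u v
  refine hG.card_le_of_forall_dist_le (c := p.getVert (G.diam / 2)) fun x ↦ ?_
  have := hG.dist_getVert_le_max huv hp (i := G.diam / 2) (by omega) x
  omega

lemma card_le_of_diam_eq (hG : G.IsTree) {k : ℕ} (hD : G.diam = 2 * k + 1) :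
    Fintype.card V ≤ #(leavesFinset G) * k + 2 := by
  have := hG.connected.nonempty
  obtain ⟨u, v, huv⟩ := G.exists_dist_eq_diam
  obtain ⟨p, hp⟩ := hG.connected.exists_walk_length_eq_dist u v
  refine hG.card_le_of_adj_of_forall_dist_le (p.adj_getVert_succ (i := k) (by omega)) fun x ↦ ?_
  have h₁ := hG.dist_getVert_le_max huv hp (i := k) (by omega) x
  have h₂ := hG.dist_getVert_le_max huv hp (i := k + 1) (by omega) x
  have := hG.dist_ne_of_adj x (p.adj_getVert_succ (i := k) (by omega))
  rw [G.dist_comm (u := x), G.dist_comm (u := x)] at this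
  omega

end IsTree

end SimpleGraph

theorem stmt17_general {V : Type*} [Fintype V] (T : SimpleGraph V)
    (hT : T.IsTree) (b n r : ℕ)
    (hleaves : (leavesFinset T).card = b) (hn : Fintype.card V = n) :
    (T.diam ≤ 2 * r → n ≤ b * r + 1) ∧
    (T.diam ≤ 2 * r - 1 → n ≤ b * (r - 1) + 2) := by
  subst hleaves hn
  refine ⟨hT.card_le_of_diam_le, fun hD ↦ ?_⟩
  obtain ⟨k, hk | hk⟩ := T.diam.even_or_odd'
  · calc _ ≤ #(leavesFinset T) * k + 1 := hT.card_le_of_diam_le hk.le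
      _ ≤ _ := by gcongr <;> omega
  · calc _ ≤ #(leavesFinset T) * k + 2 := hT.card_le_of_diam_eq hk
      _ ≤ _ := by gcongr; omega

/-- Let `T` be a tree with exactly `b ≥ 2` leaves and `n` vertices, and
let `r ≥ 1` be an integer. If the diameter of `T` is at most `2r`, then `n ≤ br + 1`;
if the diameter of `T` is at most `2r - 1`, then `n ≤ b(r-1) + 2`. -/
theorem stmt17 {V : Type*} [Fintype V] [DecidableEq V] (T : SimpleGraph V)
    (hT : T.IsTree) (b n r : ℕ) (hb : 2 ≤ b) (hr : 1 ≤ r)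
    (hleaves : (leavesFinset T).card = b) (hn : Fintype.card V = n) :
    (T.diam ≤ 2 * r → n ≤ b * r + 1) ∧
    (T.diam ≤ 2 * r - 1 → n ≤ b * (r - 1) + 2) :=
  stmt17_general T hT b n r hleaves hn
end

section
/- Let G = (V,E) be a finite connected simple graph with nonempty boundary B ⊊ V, let L be the Laplacian matrix of G, and for each real r > 0 let L^{(r)} = D^{(r)} L D^{(r)}, with eigenvalues μ_1^{(r)} ≤ μ_2^{(r)} ≤ ⋯ ≤ μ_{|V|}^{(r)} listed in increasing order with multiplicity. Then for 1 ≤ k ≤ |B| one has lim_{r→+∞} μ_k^{(r)} = σ_k(G,B), and for |B| < k ≤ |V| one has lim_{r→+∞} μ_k^{(r)} = +∞. -/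
open scoped BigOperators
open Classical

/-- The `k`-th smallest eigenvalue (1-indexed, in increasing order with multiplicity) of a
symmetric real matrix, via the variational (Courant–Fischer) characterization. -/
noncomputable def sortedEigenvalue {V : Type*} [Fintype V] (M : Matrix V V ℝ) (k : ℕ) : ℝ :=
  sInf { t : ℝ | ∃ F : Submodule ℝ (V → ℝ), Module.finrank ℝ F = k ∧
    ∀ f ∈ F, (∑ x : V, ∑ y : V, f x * M x y * f y) ≤ t * ∑ x : V, (f x) ^ 2 }

/-- The diagonal matrix `D^{(r)}` with entry `1` on boundary vertices and `r` elsewhere. -/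
noncomputable def diagMatrixD {V : Type*} [Fintype V] [DecidableEq V] (B : Finset V)
    (r : ℝ) : Matrix V V ℝ :=
  Matrix.diagonal fun x => if x ∈ B then (1 : ℝ) else r

/-!
Writing `g = D^{(r)} f`, the Rayleigh quotient of `D^{(r)} L D^{(r)}` becomes
`E(g) / (∑_B g² + r⁻² ∑_{V∖B} g²)`, with `E` the Dirichlet energy, so it never exceeds the
Steklov quotient `E(g) / ∑_B g²`; this gives `μ_k^{(r)} ≤ σ_k`. Conversely, on a connected graph
the Poincaré inequality `∑_V g² ≤ C (∑_B g² + E(g))` bounds the interior mass, and a test space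
for `μ_k^{(r)}` with value `t < r² / C` injects into `ℝ^B` and is a Steklov test space with value
`t (r² + C) / (r² - t C)`. Hence `σ_k / (1 + C (1 + σ_k) / r²) ≤ μ_k^{(r)}` for `k ≤ |B|`, while
for `k > |B|` every `k`-dimensional test space contains some `g ≠ 0` vanishing on `B`, which
forces `μ_k^{(r)} ≥ r² / C`.
-/

open Finset Filter Topology

namespace SteklovLimit

section LinearAlgebra

variable {M N : Type*} [AddCommGroup M] [Module ℝ M] [AddCommGroup N] [Module ℝ N]

theorem exists_le_finrank_eq (F : Submodule ℝ M) [FiniteDimensional ℝ F] {k : ℕ}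
    (hk : k ≤ Module.finrank ℝ F) : ∃ F' ≤ F, Module.finrank ℝ F' = k := by
  obtain ⟨s, hs, hli⟩ := exists_finset_linearIndependent_of_le_finrank hk
  refine ⟨(Submodule.span ℝ (s : Set F)).map F.subtype, Submodule.map_subtype_le _ _, ?_⟩
  rw [Submodule.finrank_map_subtype_eq, ← hs]
  exact finrank_span_finset_eq_card hli

theorem finrank_map_eq_of_disjoint_ker (f : M →ₗ[ℝ] N) {F : Submodule ℝ M}
    (h : Disjoint F (LinearMap.ker f)) : Module.finrank ℝ (F.map f) = Module.finrank ℝ F := by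
  rw [← LinearMap.range_domRestrict]
  exact LinearMap.finrank_range_of_inj (LinearMap.injective_domRestrict_iff.mpr h)

end LinearAlgebra

variable {V : Type*}

def boundaryRestriction (B : Finset V) : (V → ℝ) →ₗ[ℝ] ({v // v ∈ B} → ℝ) :=
  LinearMap.funLeft ℝ ℝ (fun x : {v // v ∈ B} => (x : V))

theorem sum_sq_eq_zero_of_mem_ker_boundaryRestriction (B : Finset V) {g : V → ℝ}
    (hg : g ∈ LinearMap.ker (boundaryRestriction B)) : ∑ x ∈ B, g x ^ 2 = 0 :=
  sum_eq_zero fun x hx => by rw [show g x = 0 from congrFun hg ⟨x, hx⟩, sq, mul_zero]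

variable [Fintype V]

theorem sum_sq_pos_of_ne_zero {f : V → ℝ} (hf : f ≠ 0) : 0 < ∑ x, f x ^ 2 := by
  obtain ⟨x, hx⟩ := Function.ne_iff.mp hf
  exact sum_pos' (fun y _ => sq_nonneg (f y)) ⟨x, mem_univ x, pow_two_pos_of_ne_zero hx⟩

theorem quadratic_le_sum_abs_mul (A : Matrix V V ℝ) (f : V → ℝ) :
    ∑ x, ∑ y, f x * A x y * f y ≤ (∑ x, ∑ y, |A x y|) * ∑ x, f x ^ 2 := by
  have hle : ∀ x, f x ^ 2 ≤ ∑ z, f z ^ 2 := fun x =>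
    single_le_sum (f := fun z => f z ^ 2) (fun z _ => sq_nonneg _) (mem_univ x)
  rw [sum_mul]
  refine sum_le_sum fun x _ => ?_
  rw [sum_mul]
  refine sum_le_sum fun y _ => ?_
  have hxy : |f x * f y| ≤ ∑ z, f z ^ 2 := by
    rw [abs_mul]
    nlinarith [two_mul_le_add_sq |f x| |f y|, sq_abs (f x), sq_abs (f y), hle x, hle y]
  calc f x * A x y * f y = A x y * (f x * f y) := by ring
    _ ≤ |A x y * (f x * f y)| := le_abs_self _
    _ ≤ |A x y| * ∑ z, f z ^ 2 := by
      rw [abs_mul]; exact mul_le_mul_of_nonneg_left hxy (abs_nonneg _)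

theorem quadratic_diagonal_mul_mul_diagonal [DecidableEq V] (A : Matrix V V ℝ) (d f : V → ℝ) :
    ∑ x, ∑ y, f x * (Matrix.diagonal d * A * Matrix.diagonal d) x y * f y
      = ∑ x, ∑ y, d x * f x * A x y * (d y * f y) := by
  simp only [Matrix.mul_diagonal, Matrix.diagonal_mul]
  exact sum_congr rfl fun x _ => sum_congr rfl fun y _ => by ring

def eigenvalueCandidates (A : Matrix V V ℝ) (k : ℕ) : Set ℝ :=
  {t | ∃ F : Submodule ℝ (V → ℝ), Module.finrank ℝ F = k ∧
    ∀ f ∈ F, ∑ x, ∑ y, f x * A x y * f y ≤ t * ∑ x, f x ^ 2}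

theorem sortedEigenvalue_eq_sInf (A : Matrix V V ℝ) (k : ℕ) :
    sortedEigenvalue A k = sInf (eigenvalueCandidates A k) := rfl

theorem sum_abs_mem_eigenvalueCandidates (A : Matrix V V ℝ) {k : ℕ} (hk : k ≤ Fintype.card V) :
    (∑ x, ∑ y, |A x y|) ∈ eigenvalueCandidates A k := by
  obtain ⟨F, -, hF⟩ := exists_le_finrank_eq (⊤ : Submodule ℝ (V → ℝ)) (by simpa using hk)
  exact ⟨F, hF, fun f _ => quadratic_le_sum_abs_mul A f⟩

theorem nonneg_of_mem_eigenvalueCandidates {A : Matrix V V ℝ}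
    (hA : ∀ f : V → ℝ, 0 ≤ ∑ x, ∑ y, f x * A x y * f y) {k : ℕ} (hk : 1 ≤ k) {t : ℝ}
    (ht : t ∈ eigenvalueCandidates A k) : 0 ≤ t := by
  obtain ⟨F, hF, hbound⟩ := ht
  obtain ⟨f, hfF, hf⟩ := Submodule.exists_mem_ne_zero_of_ne_bot (p := F) fun hbot => by
    rw [hbot, finrank_bot] at hF
    omega
  nlinarith [hA f, hbound f hfF, sum_sq_pos_of_ne_zero hf]

theorem mem_eigenvalueCandidates_diagonal_conj_iff [DecidableEq V] (A : Matrix V V ℝ)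
    {d : V → ℝ} (hd : ∀ x, d x ≠ 0) {k : ℕ} {t : ℝ} :
    t ∈ eigenvalueCandidates (Matrix.diagonal d * A * Matrix.diagonal d) k ↔
      ∃ F : Submodule ℝ (V → ℝ), Module.finrank ℝ F = k ∧
        ∀ g ∈ F, ∑ x, ∑ y, g x * A x y * g y ≤ t * ∑ x, (g x / d x) ^ 2 := by
  let e : (V → ℝ) ≃ₗ[ℝ] (V → ℝ) :=
    LinearEquiv.piCongrRight fun x => LinearEquiv.smulOfNeZero ℝ ℝ (d x) (hd x)
  have he : ∀ f x, e f x = d x * f x := fun _ _ => rfl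
  have hdiv : ∀ (f : V → ℝ) x, d x * f x / d x = f x := fun f x => mul_div_cancel_left₀ _ (hd x)
  constructor
  · rintro ⟨F, hF, hbound⟩
    refine ⟨F.map e.toLinearMap, by rw [LinearEquiv.finrank_map_eq, hF], ?_⟩
    rintro _ ⟨f, hf, rfl⟩
    simpa only [LinearEquiv.coe_coe, he, hdiv, quadratic_diagonal_mul_mul_diagonal]
      using hbound f hf
  · rintro ⟨F, hF, hbound⟩
    refine ⟨F.map e.symm.toLinearMap, by rw [LinearEquiv.finrank_map_eq, hF], ?_⟩
    rintro _ ⟨g, hg, rfl⟩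
    have hg' := hbound g hg
    rw [← e.apply_symm_apply g] at hg'
    simpa only [LinearEquiv.coe_coe, he, hdiv, quadratic_diagonal_mul_mul_diagonal] using hg'

section Graph

variable (G : SimpleGraph V)

theorem dirichletEnergy_nonneg (f : V → ℝ) : 0 ≤ dirichletEnergy G f :=
  div_nonneg (sum_nonneg fun x _ => sum_nonneg fun y _ => by split <;> positivity) zero_le_two

theorem sq_sub_le_two_mul_dirichletEnergy (f : V → ℝ) {x y : V} (h : G.Adj x y) :
    (f x - f y) ^ 2 ≤ 2 * dirichletEnergy G f := by
  have hterm : ∀ a b : V, 0 ≤ if G.Adj a b then (f a - f b) ^ 2 else 0 := fun a b => by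
    split <;> positivity
  rw [dirichletEnergy, mul_div_cancel₀ _ two_ne_zero]
  calc (f x - f y) ^ 2 = if G.Adj x y then (f x - f y) ^ 2 else 0 := (if_pos h).symm
    _ ≤ ∑ b, if G.Adj x b then (f x - f b) ^ 2 else 0 :=
      single_le_sum (f := fun b => if G.Adj x b then _ else _) (fun b _ => hterm x b) (mem_univ y)
    _ ≤ ∑ a, ∑ b, if G.Adj a b then (f a - f b) ^ 2 else 0 :=
      single_le_sum (f := fun a => ∑ b, if G.Adj a b then _ else _)
        (fun a _ => sum_nonneg fun b _ => hterm a b) (mem_univ x)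

theorem abs_sub_le_length_mul_sqrt (f : V → ℝ) {x y : V} (p : G.Walk x y) :
    |f x - f y| ≤ p.length * √(2 * dirichletEnergy G f) := by
  induction p with
  | nil => simp
  | @cons u v w h q ih =>
    have hedge : |f u - f v| ≤ √(2 * dirichletEnergy G f) := by
      rw [← Real.sqrt_sq_eq_abs]
      exact Real.sqrt_le_sqrt (sq_sub_le_two_mul_dirichletEnergy G f h)
    calc |f u - f w| ≤ |f u - f v| + |f v - f w| := abs_sub_le _ _ _
      _ ≤ √(2 * dirichletEnergy G f) + q.length * √(2 * dirichletEnergy G f) :=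
        add_le_add hedge ih
      _ = (q.cons h).length * √(2 * dirichletEnergy G f) := by
        rw [SimpleGraph.Walk.length_cons]; push_cast; ring

theorem exists_poincare_constant (hG : G.Connected) {B : Finset V} (hB : B.Nonempty) :
    ∃ C > 0, ∀ f : V → ℝ, ∑ x, f x ^ 2 ≤ C * (∑ x ∈ B, f x ^ 2 + dirichletEnergy G f) := by
  obtain ⟨b, hb⟩ := hB
  set n : ℝ := ((Fintype.card V : ℕ) : ℝ)
  have hn : 1 ≤ n := Nat.one_le_cast.mpr (Fintype.card_pos_iff.mpr ⟨b⟩)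
  refine ⟨n * (2 + 4 * n ^ 2), by positivity, fun f => ?_⟩
  have hE := dirichletEnergy_nonneg G f
  have hfb : f b ^ 2 ≤ ∑ x ∈ B, f x ^ 2 :=
    single_le_sum (f := fun x => f x ^ 2) (fun x _ => sq_nonneg _) hb
  have hpoint : ∀ x, f x ^ 2 ≤ (2 + 4 * n ^ 2) * (∑ x ∈ B, f x ^ 2 + dirichletEnergy G f) := by
    intro x
    obtain ⟨w⟩ := hG.preconnected x b
    have hlen : (w.bypass.length : ℝ) ≤ n := Nat.cast_le.mpr w.bypass_isPath.length_lt.le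
    have hdiff : |f x - f b| ≤ n * √(2 * dirichletEnergy G f) :=
      (abs_sub_le_length_mul_sqrt G f w.bypass).trans (by gcongr)
    have hsq : (f x - f b) ^ 2 ≤ n ^ 2 * (2 * dirichletEnergy G f) := by
      rw [← sq_abs, ← Real.sq_sqrt (by positivity : 0 ≤ 2 * dirichletEnergy G f), ← mul_pow]
      exact pow_le_pow_left₀ (abs_nonneg _) hdiff 2
    nlinarith [sq_nonneg (f x - 2 * f b), sq_nonneg n]
  calc ∑ x, f x ^ 2 ≤ ∑ _x : V, (2 + 4 * n ^ 2) * (∑ x ∈ B, f x ^ 2 + dirichletEnergy G f) :=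
        sum_le_sum fun x _ => hpoint x
    _ = n * (2 + 4 * n ^ 2) * (∑ x ∈ B, f x ^ 2 + dirichletEnergy G f) := by
        rw [sum_const, card_univ, nsmul_eq_mul, mul_assoc]

theorem quadratic_lapMatrix [DecidableEq V] [DecidableRel G.Adj] (f : V → ℝ) :
    ∑ x, ∑ y, f x * G.lapMatrix ℝ x y * f y = dirichletEnergy G f := by
  have h := G.lapMatrix_toLinearMap₂' (R := ℝ) f
  rw [Matrix.toLinearMap₂'_apply] at h
  calc _ = ∑ x, ∑ y, f x • f y • G.lapMatrix ℝ x y :=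
        sum_congr rfl fun x _ => sum_congr rfl fun y _ => by simp only [smul_eq_mul]; ring
    _ = dirichletEnergy G f := by rw [h, dirichletEnergy]; congr!

end Graph

section Steklov

variable (G : SimpleGraph V) (B : Finset V)

def steklovCandidates (k : ℕ) : Set ℝ :=
  {t | ∃ F : Submodule ℝ (V → ℝ), Module.finrank ℝ (F.map (boundaryRestriction B)) = k ∧
    ∀ f ∈ F, dirichletEnergy G f ≤ t * ∑ x ∈ B, f x ^ 2}

theorem steklovEig_eq_sInf (k : ℕ) : steklovEig G B k = sInf (steklovCandidates G B k) := rfl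

theorem nonneg_of_mem_steklovCandidates {k : ℕ} (hk : 1 ≤ k) {t : ℝ}
    (ht : t ∈ steklovCandidates G B k) : 0 ≤ t := by
  obtain ⟨F, hF, hbound⟩ := ht
  obtain ⟨_, ⟨f, hfF, rfl⟩, hf⟩ := Submodule.exists_mem_ne_zero_of_ne_bot
    (p := F.map (boundaryRestriction B)) fun hbot => by
      rw [hbot, finrank_bot] at hF
      omega
  obtain ⟨x, hx⟩ := Function.ne_iff.mp hf
  have hpos : 0 < ∑ x ∈ B, f x ^ 2 :=
    sum_pos' (fun y _ => sq_nonneg (f y)) ⟨x, x.2, pow_two_pos_of_ne_zero hx⟩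
  nlinarith [dirichletEnergy_nonneg G f, hbound f hfF]

theorem steklovEig_nonneg {k : ℕ} (hk : 1 ≤ k) : 0 ≤ steklovEig G B k :=
  Real.sInf_nonneg fun _ => nonneg_of_mem_steklovCandidates G B hk

theorem steklovCandidates_nonempty {k : ℕ} (hk : k ≤ B.card) :
    (steklovCandidates G B k).Nonempty := by
  let extend := Function.ExtendByZero.linearMap ℝ (Subtype.val : {v // v ∈ B} → V)
  have hres : (boundaryRestriction B).comp extend = LinearMap.id :=
    LinearMap.ext fun g => funext fun b => Subtype.val_injective.extend_apply g 0 b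
  have hsum : ∀ g, ∑ x, extend g x ^ 2 = ∑ x ∈ B, extend g x ^ 2 := fun g =>
    (sum_subset (subset_univ B) fun x _ hx => by
      rw [Function.ExtendByZero.linearMap_apply, Function.extend_apply' g (0 : V → ℝ) x
        (by rintro ⟨a, rfl⟩; exact hx a.2), Pi.zero_apply, sq, mul_zero]).symm
  obtain ⟨W, -, hW⟩ := exists_le_finrank_eq (⊤ : Submodule ℝ ({v // v ∈ B} → ℝ))
    (by simpa using hk)
  refine ⟨∑ x, ∑ y, |G.lapMatrix ℝ x y|, W.map extend, ?_, ?_⟩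
  · rw [← Submodule.map_comp, hres, Submodule.map_id, hW]
  · rintro _ ⟨g, -, rfl⟩
    rw [← quadratic_lapMatrix, ← hsum]
    exact quadratic_le_sum_abs_mul _ _

end Steklov

section Limit

variable [DecidableEq V] (G : SimpleGraph V) (B : Finset V)

theorem sum_sq_div_ite_mem_eq (r : ℝ) (g : V → ℝ) :
    ∑ x, (g x / if x ∈ B then 1 else r) ^ 2
      = ∑ x ∈ B, g x ^ 2 + (∑ x ∈ Bᶜ, g x ^ 2) / r ^ 2 := by
  rw [← sum_add_sum_compl B, sum_div]
  congr 1
  · exact sum_congr rfl fun x hx => by rw [if_pos hx, div_one]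
  · exact sum_congr rfl fun x hx => by rw [if_neg (mem_compl.mp hx), div_pow]

theorem sub_mul_dirichletEnergy_le {C r t : ℝ} (hr : r ≠ 0) (ht : 0 ≤ t) {g : V → ℝ}
    (hP : ∑ x, g x ^ 2 ≤ C * (∑ x ∈ B, g x ^ 2 + dirichletEnergy G g))
    (hg : dirichletEnergy G g ≤ t * (∑ x ∈ B, g x ^ 2 + (∑ x ∈ Bᶜ, g x ^ 2) / r ^ 2)) :
    (r ^ 2 - t * C) * dirichletEnergy G g ≤ t * (r ^ 2 + C) * ∑ x ∈ B, g x ^ 2 := by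
  have hsplit := sum_add_sum_compl B fun x => g x ^ 2
  have hbdry : 0 ≤ ∑ x ∈ B, g x ^ 2 := sum_nonneg fun x _ => sq_nonneg _
  have hscaled : r ^ 2 * dirichletEnergy G g
      ≤ t * (r ^ 2 * ∑ x ∈ B, g x ^ 2 + ∑ x ∈ Bᶜ, g x ^ 2) := by
    calc r ^ 2 * dirichletEnergy G g
        ≤ r ^ 2 * (t * (∑ x ∈ B, g x ^ 2 + (∑ x ∈ Bᶜ, g x ^ 2) / r ^ 2)) := by gcongr
      _ = t * (r ^ 2 * ∑ x ∈ B, g x ^ 2 + ∑ x ∈ Bᶜ, g x ^ 2) := by field_simp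
  nlinarith [mul_le_mul_of_nonneg_left hP ht, mul_nonneg ht hbdry]

variable [DecidableRel G.Adj]

theorem mem_eigenvalueCandidates_iff {r : ℝ} (hr : r ≠ 0) {k : ℕ} {t : ℝ} :
    t ∈ eigenvalueCandidates (diagMatrixD B r * G.lapMatrix ℝ * diagMatrixD B r) k ↔
      ∃ F : Submodule ℝ (V → ℝ), Module.finrank ℝ F = k ∧ ∀ g ∈ F,
        dirichletEnergy G g ≤ t * (∑ x ∈ B, g x ^ 2 + (∑ x ∈ Bᶜ, g x ^ 2) / r ^ 2) := by
  rw [diagMatrixD, mem_eigenvalueCandidates_diagonal_conj_iff _ fun x => by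
    split_ifs
    exacts [one_ne_zero, hr]]
  simp only [quadratic_lapMatrix, sum_sq_div_ite_mem_eq]

theorem nonneg_of_mem_eigenvalueCandidates_laplacian {r : ℝ} {k : ℕ} (hk : 1 ≤ k) {t : ℝ}
    (ht : t ∈ eigenvalueCandidates (diagMatrixD B r * G.lapMatrix ℝ * diagMatrixD B r) k) :
    0 ≤ t :=
  nonneg_of_mem_eigenvalueCandidates (fun f => by
    rw [diagMatrixD, quadratic_diagonal_mul_mul_diagonal]
    exact le_of_le_of_eq (dirichletEnergy_nonneg G _) (quadratic_lapMatrix G _).symm) hk ht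

theorem mem_eigenvalueCandidates_of_mem_steklovCandidates {r : ℝ} (hr : r ≠ 0) {k : ℕ}
    (hk : 1 ≤ k) {s : ℝ} (hs : s ∈ steklovCandidates G B k) :
    s ∈ eigenvalueCandidates (diagMatrixD B r * G.lapMatrix ℝ * diagMatrixD B r) k := by
  have hs0 := nonneg_of_mem_steklovCandidates G B hk hs
  obtain ⟨F, hF, hbound⟩ := hs
  obtain ⟨F', hle, hF'⟩ := exists_le_finrank_eq F (hF ▸ Submodule.finrank_map_le _ _)
  refine (mem_eigenvalueCandidates_iff G B hr).mpr ⟨F', hF', fun g hg => ?_⟩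
  calc dirichletEnergy G g ≤ s * ∑ x ∈ B, g x ^ 2 := hbound g (hle hg)
    _ ≤ s * (∑ x ∈ B, g x ^ 2 + (∑ x ∈ Bᶜ, g x ^ 2) / r ^ 2) := by
      gcongr
      exact le_add_of_nonneg_right (by positivity)

theorem sortedEigenvalue_le_steklovEig {r : ℝ} (hr : r ≠ 0) {k : ℕ} (hk : 1 ≤ k)
    (hkB : k ≤ B.card) :
    sortedEigenvalue (diagMatrixD B r * G.lapMatrix ℝ * diagMatrixD B r) k
      ≤ steklovEig G B k :=
  le_csInf (steklovCandidates_nonempty G B hkB) fun _ hs =>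
    csInf_le ⟨0, fun _ => nonneg_of_mem_eigenvalueCandidates_laplacian G B hk⟩
      (mem_eigenvalueCandidates_of_mem_steklovCandidates G B hr hk hs)

theorem steklovEig_mul_sub_le {C : ℝ}
    (hC : ∀ f : V → ℝ, ∑ x, f x ^ 2 ≤ C * (∑ x ∈ B, f x ^ 2 + dirichletEnergy G f))
    {r : ℝ} (hr : r ≠ 0) {k : ℕ} (hk : 1 ≤ k) {t : ℝ}
    (ht : t ∈ eigenvalueCandidates (diagMatrixD B r * G.lapMatrix ℝ * diagMatrixD B r) k) :
    steklovEig G B k * (r ^ 2 - t * C) ≤ t * (r ^ 2 + C) := by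
  have ht0 := nonneg_of_mem_eigenvalueCandidates_laplacian G B hk ht
  have hσ0 := steklovEig_nonneg G B hk
  rcases le_or_gt (r ^ 2) (t * C) with hle | hlt
  · nlinarith [mul_nonneg ht0 (sq_nonneg r)]
  obtain ⟨F, hF, hbound⟩ := (mem_eigenvalueCandidates_iff G B hr).mp ht
  have hcore := fun g hg => sub_mul_dirichletEnergy_le G B hr ht0 (hC g) (hbound g hg)
  -- a function of `F` vanishing on `B` has zero energy, hence vanishes by Poincaré
  have hdisj : Disjoint F (LinearMap.ker (boundaryRestriction B)) := by
    refine Submodule.disjoint_def.mpr fun g hg hker => ?_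
    have hB0 := sum_sq_eq_zero_of_mem_ker_boundaryRestriction B hker
    have hcore₀ := hcore g hg
    rw [hB0, mul_zero] at hcore₀
    have hE : dirichletEnergy G g = 0 := le_antisymm
      (nonpos_of_mul_nonpos_right hcore₀ (by linarith)) (dirichletEnergy_nonneg G g)
    have hP := hC g
    rw [hB0, hE, add_zero, mul_zero] at hP
    by_contra hne
    linarith [sum_sq_pos_of_ne_zero hne]
  have hmem : t * (r ^ 2 + C) / (r ^ 2 - t * C) ∈ steklovCandidates G B k := by
    refine ⟨F, (finrank_map_eq_of_disjoint_ker _ hdisj).trans hF, fun g hg => ?_⟩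
    rw [div_mul_eq_mul_div, le_div_iff₀ (by linarith)]
    linarith [hcore g hg]
  have hσ := csInf_le ⟨0, fun _ => nonneg_of_mem_steklovCandidates G B hk⟩ hmem
  rwa [← steklovEig_eq_sInf, le_div_iff₀ (by linarith)] at hσ

theorem steklovEig_div_le_sortedEigenvalue {C : ℝ} (hC0 : 0 ≤ C)
    (hC : ∀ f : V → ℝ, ∑ x, f x ^ 2 ≤ C * (∑ x ∈ B, f x ^ 2 + dirichletEnergy G f))
    {r : ℝ} (hr : r ≠ 0) {k : ℕ} (hk : 1 ≤ k) (hkV : k ≤ Fintype.card V) :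
    steklovEig G B k / (1 + C * (1 + steklovEig G B k) / r ^ 2)
      ≤ sortedEigenvalue (diagMatrixD B r * G.lapMatrix ℝ * diagMatrixD B r) k := by
  have hσ0 := steklovEig_nonneg G B hk
  have hr2 : 0 < r ^ 2 := by positivity
  refine le_csInf ⟨_, sum_abs_mem_eigenvalueCandidates _ hkV⟩ fun t ht => ?_
  have h := steklovEig_mul_sub_le G B hC hr hk ht
  rw [div_le_iff₀ (by positivity), mul_add, mul_one, ← mul_div_assoc,
    ← sub_le_iff_le_add', le_div_iff₀ hr2]
  nlinarith

theorem sq_div_le_of_mem_eigenvalueCandidates {C : ℝ} (hC0 : 0 < C)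
    (hC : ∀ f : V → ℝ, ∑ x, f x ^ 2 ≤ C * (∑ x ∈ B, f x ^ 2 + dirichletEnergy G f))
    {r : ℝ} (hr : r ≠ 0) {k : ℕ} (hkB : B.card < k) {t : ℝ}
    (ht : t ∈ eigenvalueCandidates (diagMatrixD B r * G.lapMatrix ℝ * diagMatrixD B r) k) :
    r ^ 2 / C ≤ t := by
  have ht0 := nonneg_of_mem_eigenvalueCandidates_laplacian G B (by omega) ht
  obtain ⟨F, hF, hbound⟩ := (mem_eigenvalueCandidates_iff G B hr).mp ht
  -- `F` is too large to inject into `ℝ^B`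
  have hndisj : ¬Disjoint F (LinearMap.ker (boundaryRestriction B)) := fun hdisj => by
    have := (finrank_map_eq_of_disjoint_ker _ hdisj).symm.trans_le (Submodule.finrank_le _)
    rw [hF, Module.finrank_fintype_fun_eq_card, Fintype.card_coe] at this
    omega
  obtain ⟨g, hg, hker, hne⟩ : ∃ g ∈ F, g ∈ LinearMap.ker (boundaryRestriction B) ∧ g ≠ 0 := by
    simpa [Submodule.disjoint_def] using hndisj
  have hB0 := sum_sq_eq_zero_of_mem_ker_boundaryRestriction B hker
  have hcore := sub_mul_dirichletEnergy_le G B hr ht0 (hC g) (hbound g hg)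
  have hP := hC g
  rw [hB0, mul_zero] at hcore
  rw [hB0, zero_add] at hP
  have hE : 0 < dirichletEnergy G g := by nlinarith [sum_sq_pos_of_ne_zero hne]
  rw [div_le_iff₀ hC0]
  nlinarith

theorem sq_div_le_sortedEigenvalue {C : ℝ} (hC0 : 0 < C)
    (hC : ∀ f : V → ℝ, ∑ x, f x ^ 2 ≤ C * (∑ x ∈ B, f x ^ 2 + dirichletEnergy G f))
    {r : ℝ} (hr : r ≠ 0) {k : ℕ} (hkB : B.card < k) (hkV : k ≤ Fintype.card V) :
    r ^ 2 / C ≤ sortedEigenvalue (diagMatrixD B r * G.lapMatrix ℝ * diagMatrixD B r) k :=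
  le_csInf ⟨_, sum_abs_mem_eigenvalueCandidates _ hkV⟩ fun _ =>
    sq_div_le_of_mem_eigenvalueCandidates G B hC0 hC hr hkB

end Limit


end SteklovLimit

open SteklovLimit

theorem stmt18_general {V : Type*} [Fintype V] [DecidableEq V] (G : SimpleGraph V)
    [DecidableRel G.Adj] (hconn : G.Connected) (B : Finset V) (hB : B.Nonempty) :
    (∀ k : ℕ, 1 ≤ k → k ≤ B.card →
      Filter.Tendsto
        (fun r : ℝ =>
          sortedEigenvalue (diagMatrixD B r * G.lapMatrix ℝ * diagMatrixD B r) k)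
        Filter.atTop (nhds (steklovEig G B k))) ∧
    (∀ k : ℕ, B.card < k → k ≤ Fintype.card V →
      Filter.Tendsto
        (fun r : ℝ =>
          sortedEigenvalue (diagMatrixD B r * G.lapMatrix ℝ * diagMatrixD B r) k)
        Filter.atTop Filter.atTop) := by
  obtain ⟨C, hC0, hC⟩ := exists_poincare_constant G hconn hB
  refine ⟨fun k hk hkB => ?_, fun k hkB hkV => ?_⟩
  · set σ := steklovEig G B k
    have hlim : Tendsto (fun r : ℝ => σ / (1 + C * (1 + σ) / r ^ 2)) atTop (𝓝 σ) := by
      simpa [Pi.div_def] using tendsto_const_nhds.div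
        (tendsto_const_nhds.add (tendsto_const_nhds.div_atTop (tendsto_pow_atTop two_ne_zero)))
        (by norm_num : (1 : ℝ) + 0 ≠ 0)
    refine tendsto_of_tendsto_of_tendsto_of_le_of_le' hlim tendsto_const_nhds ?_ ?_
    · filter_upwards [eventually_ne_atTop 0] with r hr using
        steklovEig_div_le_sortedEigenvalue G B hC0.le hC hr hk (hkB.trans (card_le_univ B))
    · filter_upwards [eventually_ne_atTop 0] with r hr using
        sortedEigenvalue_le_steklovEig G B hr hk hkB
  · refine tendsto_atTop_mono' atTop ?_ ((tendsto_pow_atTop two_ne_zero).atTop_div_const hC0)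
    filter_upwards [eventually_ne_atTop 0] with r hr using
      sq_div_le_sortedEigenvalue G B hC0 hC hr hkB hkV

/-- Let `G = (V,E)` be a finite connected simple graph with nonempty
boundary `B ⊊ V`, let `L` be the Laplacian matrix of `G`, and for each real `r > 0` let
`L^{(r)} = D^{(r)} L D^{(r)}`, with eigenvalues `μ₁^{(r)} ≤ ⋯ ≤ μ_{|V|}^{(r)}` listed in
increasing order with multiplicity. Then for `1 ≤ k ≤ |B|` one has
`lim_{r→+∞} μₖ^{(r)} = σₖ(G,B)`, and for `|B| < k ≤ |V|` one has
`lim_{r→+∞} μₖ^{(r)} = +∞`. -/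
theorem stmt18 {V : Type*} [Fintype V] [DecidableEq V] (G : SimpleGraph V)
    [DecidableRel G.Adj] (hconn : G.Connected) (B : Finset V) (hB : B.Nonempty)
    (hBV : B ≠ Finset.univ) :
    (∀ k : ℕ, 1 ≤ k → k ≤ B.card →
      Filter.Tendsto
        (fun r : ℝ =>
          sortedEigenvalue (diagMatrixD B r * G.lapMatrix ℝ * diagMatrixD B r) k)
        Filter.atTop (nhds (steklovEig G B k))) ∧
    (∀ k : ℕ, B.card < k → k ≤ Fintype.card V →
      Filter.Tendsto
        (fun r : ℝ =>
          sortedEigenvalue (diagMatrixD B r * G.lapMatrix ℝ * diagMatrixD B r) k)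
        Filter.atTop Filter.atTop) :=
  stmt18_general G hconn B hB
end
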